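/- arXiv:0709.2366 — 5 statements merged into one kernel-verified Lean document; each statement's English description precedes it below -/
import Mathlib

section
/- Let I ⊆ ℝ be an interval, let b₀, b₁, b₂ : I → ℝ, and let x, x₁, x₂, x₃ : I → ℝ be differentiable solutions of the Riccati equation ξ'(t) = b₀(t) + b₁(t)ξ(t) + b₂(t)ξ(t)². Assume (x(t) − x₂(t))·(x₁(t) − x₃(t)) ≠ 0 for all t ∈ I. Then the cross-ratio t ↦ ((x(t) − x₁(t))·(x₂(t) − x₃(t))) / ((x(t) − x₂(t))·(x₁(t) − x₃(t))) has derivative zero on I; in particular it is constant on I. This is the nonlinear superposition rule for the Riccati equation: any solution x is determined by three particular solutions x₁, x₂, x₃ and one constant K. -/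
/-!
For the Riccati vector field `f(ξ) = b₀ + b₁ ξ + b₂ ξ²` one has
`f(u) - f(v) = (u - v) (b₁ + b₂ (u + v))`, so the difference of two solutions has logarithmic
derivative `b₁ + b₂ (u + v)`. Hence both `(x - x₁)(x₂ - x₃)` and `(x - x₂)(x₁ - x₃)` have the
same logarithmic derivative `2 b₁ + b₂ (x + x₁ + x₂ + x₃)`, and their quotient has derivative zero.
-/

theorem riccati_sub_riccati (b₀ b₁ b₂ u v : ℝ) :
    (b₀ + b₁ * u + b₂ * u ^ 2) - (b₀ + b₁ * v + b₂ * v ^ 2) = (u - v) * (b₁ + b₂ * (u + v)) := by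
  ring

section Riccati

variable {b₀ b₁ b₂ t : ℝ} {u v w z : ℝ → ℝ}

theorem HasDerivAt.sub_of_riccati
    (hu : HasDerivAt u (b₀ + b₁ * u t + b₂ * u t ^ 2) t)
    (hv : HasDerivAt v (b₀ + b₁ * v t + b₂ * v t ^ 2) t) :
    HasDerivAt (fun s => u s - v s) ((u t - v t) * (b₁ + b₂ * (u t + v t))) t :=
  (hu.sub hv).congr_deriv (riccati_sub_riccati b₀ b₁ b₂ (u t) (v t))

theorem HasDerivAt.mul_sub_of_riccati
    (hu : HasDerivAt u (b₀ + b₁ * u t + b₂ * u t ^ 2) t)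
    (hv : HasDerivAt v (b₀ + b₁ * v t + b₂ * v t ^ 2) t)
    (hw : HasDerivAt w (b₀ + b₁ * w t + b₂ * w t ^ 2) t)
    (hz : HasDerivAt z (b₀ + b₁ * z t + b₂ * z t ^ 2) t) :
    HasDerivAt (fun s => (u s - v s) * (w s - z s))
      ((u t - v t) * (w t - z t) * (2 * b₁ + b₂ * (u t + v t + w t + z t))) t :=
  ((hu.sub_of_riccati hv).mul (hw.sub_of_riccati hz)).congr_deriv (by ring)

end Riccati

theorem HasDerivAt.div_eq_zero_of_logDeriv_eq {f g : ℝ → ℝ} {c t : ℝ}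
    (hf : HasDerivAt f (f t * c) t) (hg : HasDerivAt g (g t * c) t) (hgt : g t ≠ 0) :
    HasDerivAt (fun s => f s / g s) 0 t :=
  (hf.div hg hgt).congr_deriv (by rw [div_eq_zero_iff]; left; ring)

theorem Set.OrdConnected.eq_of_hasDerivAt_eq_zero {I : Set ℝ} (hI : I.OrdConnected) {f : ℝ → ℝ}
    (hf : ∀ t ∈ I, HasDerivAt f 0 t) {s t : ℝ} (hs : s ∈ I) (ht : t ∈ I) : f s = f t := by
  have h := hI.convex.norm_image_sub_le_of_norm_hasDerivWithin_le
    (fun u hu => (hf u hu).hasDerivWithinAt) (fun _ _ => norm_zero.le) ht hs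
  rw [zero_mul, norm_le_zero_iff, sub_eq_zero] at h
  exact h

/-- Nonlinear superposition rule for the Riccati equation: the cross-ratio of
four solutions has zero derivative on the interval, hence is constant. -/
theorem riccati_cross_ratio_constant
    (I : Set ℝ) (hI : I.OrdConnected)
    (b₀ b₁ b₂ : ℝ → ℝ) (x x₁ x₂ x₃ : ℝ → ℝ)
    (hx : ∀ t ∈ I, HasDerivAt x (b₀ t + b₁ t * x t + b₂ t * x t ^ 2) t)
    (hx₁ : ∀ t ∈ I, HasDerivAt x₁ (b₀ t + b₁ t * x₁ t + b₂ t * x₁ t ^ 2) t)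
    (hx₂ : ∀ t ∈ I, HasDerivAt x₂ (b₀ t + b₁ t * x₂ t + b₂ t * x₂ t ^ 2) t)
    (hx₃ : ∀ t ∈ I, HasDerivAt x₃ (b₀ t + b₁ t * x₃ t + b₂ t * x₃ t ^ 2) t)
    (hne : ∀ t ∈ I, (x t - x₂ t) * (x₁ t - x₃ t) ≠ 0) :
    (∀ t ∈ I, HasDerivAt
        (fun s => ((x s - x₁ s) * (x₂ s - x₃ s)) / ((x s - x₂ s) * (x₁ s - x₃ s))) 0 t) ∧
    (∀ s ∈ I, ∀ t ∈ I,
        ((x s - x₁ s) * (x₂ s - x₃ s)) / ((x s - x₂ s) * (x₁ s - x₃ s)) =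
        ((x t - x₁ t) * (x₂ t - x₃ t)) / ((x t - x₂ t) * (x₁ t - x₃ t))) := by
  have hderiv : ∀ t ∈ I, HasDerivAt
      (fun s => ((x s - x₁ s) * (x₂ s - x₃ s)) / ((x s - x₂ s) * (x₁ s - x₃ s))) 0 t := by
    intro t ht
    have hnum := (hx t ht).mul_sub_of_riccati (hx₁ t ht) (hx₂ t ht) (hx₃ t ht)
    have hden := (hx t ht).mul_sub_of_riccati (hx₂ t ht) (hx₁ t ht) (hx₃ t ht)
    rw [add_right_comm (x t) (x₂ t) (x₁ t)] at hden
    exact hnum.div_eq_zero_of_logDeriv_eq hden (hne t ht)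
  exact ⟨hderiv, fun s hs t ht => hI.eq_of_hasDerivAt_eq_zero hderiv hs ht⟩
end

section
/- Let k ≠ 0 be a real number and let w₁, w₂ : ℝ × ℝ → ℝ be two solutions of the equation ∂w/∂t + (1/2)(∂w/∂x)² − (k/2)(∂²w/∂x²) = 0, each having a first partial derivative in t and continuous partial derivatives up to second order in x. Then for any real constants ℓ₁, ℓ₂, the function w(t,x) = −k·log( exp(−(w₁(t,x) + ℓ₁)/k) + exp(−(w₂(t,x) + ℓ₂)/k) ) is again a solution of ∂w/∂t + (1/2)(∂w/∂x)² − (k/2)(∂²w/∂x²) = 0. -/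
/-!
Cole–Hopf: `w` solves the equation iff `u = exp (-w / k)` solves the heat equation
`∂u/∂t = (k/2) ∂²u/∂x²`. Adding the constant `ℓᵢ` to `wᵢ` keeps it a solution, and the heat
equation is linear, so `exp (-(w₁ + ℓ₁) / k) + exp (-(w₂ + ℓ₂) / k)` is again a positive heat
solution; the function `w` of the statement is `-k` times its logarithm.
-/

open Real

/-- The variant Burgers equation ∂w/∂t + (1/2)(∂w/∂x)² − (k/2)(∂²w/∂x²) = 0
for `w : ℝ × ℝ → ℝ` (first variable the time `t`, second the space `x`). -/
def IsBurgersSolution (k : ℝ) (w : ℝ × ℝ → ℝ) : Prop :=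
  ∀ t x : ℝ,
    deriv (fun s => w (s, x)) t + (1 / 2) * (deriv (fun y => w (t, y)) x) ^ 2
      - (k / 2) * deriv (deriv (fun y => w (t, y))) x = 0

def IsHeatSolution (k : ℝ) (u : ℝ × ℝ → ℝ) : Prop :=
  ∀ t x : ℝ, deriv (fun s => u (s, x)) t = k / 2 * deriv (deriv fun y => u (t, y)) x

structure SpaceTimeRegular (w : ℝ × ℝ → ℝ) : Prop where
  differentiableAt_time : ∀ t x : ℝ, DifferentiableAt ℝ (fun s => w (s, x)) t
  contDiff_space : ∀ t : ℝ, ContDiff ℝ 2 (fun y => w (t, y))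

namespace SpaceTimeRegular

variable {w v : ℝ × ℝ → ℝ}

theorem comp_of_contDiffOn (hw : SpaceTimeRegular w) {g : ℝ → ℝ} {s : Set ℝ}
    (hg : ContDiffOn ℝ 2 g s) (hs : IsOpen s) (hws : ∀ p, w p ∈ s) :
    SpaceTimeRegular (fun p => g (w p)) where
  differentiableAt_time t x :=
    ((hg.differentiableOn two_ne_zero).differentiableAt (hs.mem_nhds (hws _))).comp t
      (hw.differentiableAt_time t x)
  contDiff_space t := hg.comp_contDiff (hw.contDiff_space t) fun _ => hws _

theorem comp (hw : SpaceTimeRegular w) {g : ℝ → ℝ} (hg : ContDiff ℝ 2 g) :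
    SpaceTimeRegular (fun p => g (w p)) :=
  hw.comp_of_contDiffOn hg.contDiffOn isOpen_univ fun _ => Set.mem_univ _

theorem add (hw : SpaceTimeRegular w) (hv : SpaceTimeRegular v) :
    SpaceTimeRegular (fun p => w p + v p) where
  differentiableAt_time t x := (hw.differentiableAt_time t x).add (hv.differentiableAt_time t x)
  contDiff_space t := (hw.contDiff_space t).add (hv.contDiff_space t)

end SpaceTimeRegular

theorem deriv_deriv_exp_comp {f : ℝ → ℝ} {x : ℝ} (hf : Differentiable ℝ f)
    (hf' : DifferentiableAt ℝ (deriv f) x) :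
    deriv (deriv fun y => exp (f y)) x = exp (f x) * (deriv f x ^ 2 + deriv (deriv f) x) := by
  have hderiv : (deriv fun y => exp (f y)) = fun y => exp (f y) * deriv f y :=
    funext fun y => deriv_exp (hf y)
  rw [hderiv, deriv_fun_mul (hf x).exp hf', deriv_exp (hf x)]
  ring

theorem IsBurgersSolution.add_const {k : ℝ} {w : ℝ × ℝ → ℝ} (hw : IsBurgersSolution k w)
    (ℓ : ℝ) : IsBurgersSolution k (fun p => w p + ℓ) := by
  intro t x
  simpa only [deriv_add_const, deriv_add_const'] using hw t x

theorem IsHeatSolution.add {k : ℝ} {u v : ℝ × ℝ → ℝ} (hu : IsHeatSolution k u)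
    (hv : IsHeatSolution k v) (hu_reg : SpaceTimeRegular u) (hv_reg : SpaceTimeRegular v) :
    IsHeatSolution k (fun p => u p + v p) := by
  intro t x
  have hu_x := hu_reg.contDiff_space t
  have hv_x := hv_reg.contDiff_space t
  have hderiv : (deriv fun y => u (t, y) + v (t, y)) =
      fun y => deriv (fun y => u (t, y)) y + deriv (fun y => v (t, y)) y :=
    funext fun y => deriv_add (hu_x.differentiable two_ne_zero y)
      (hv_x.differentiable two_ne_zero y)
  rw [hderiv, deriv_fun_add (hu_reg.differentiableAt_time t x) (hv_reg.differentiableAt_time t x),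
    deriv_fun_add (hu_x.differentiable_deriv_two x) (hv_x.differentiable_deriv_two x),
    hu t x, hv t x]
  ring

theorem heat_residual_exp_neg_div {k : ℝ} (hk : k ≠ 0) {w : ℝ × ℝ → ℝ}
    (hw : SpaceTimeRegular w) (t x : ℝ) :
    deriv (fun s => exp (-w (s, x) / k)) t
        - k / 2 * deriv (deriv fun y => exp (-w (t, y) / k)) x =
      -(exp (-w (t, x) / k) / k) *
        (deriv (fun s => w (s, x)) t + 1 / 2 * deriv (fun y => w (t, y)) x ^ 2
          - k / 2 * deriv (deriv fun y => w (t, y)) x) := by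
  have hw_x := hw.contDiff_space t
  have hf : Differentiable ℝ fun y => -w (t, y) / k :=
    (hw_x.differentiable two_ne_zero).fun_neg.div_const k
  have hf' : ∀ y, deriv (fun y => -w (t, y) / k) y = -deriv (fun y => w (t, y)) y / k :=
    fun y => by rw [deriv_div_const, deriv.fun_neg]
  have hf'' : deriv (deriv fun y => -w (t, y) / k) x =
      -deriv (deriv fun y => w (t, y)) x / k := by
    rw [funext hf', deriv_div_const, deriv.fun_neg]
  have ht : deriv (fun s => -w (s, x) / k) t = -deriv (fun s => w (s, x)) t / k := by
    rw [deriv_div_const, deriv.fun_neg]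
  rw [deriv_exp ((hw.differentiableAt_time t x).fun_neg.div_const k), ht,
    deriv_deriv_exp_comp hf (by rw [funext hf']; exact
      (hw_x.differentiable_deriv_two x).fun_neg.div_const k), hf', hf'']
  field_simp
  ring

theorem isBurgersSolution_iff_isHeatSolution_exp {k : ℝ} (hk : k ≠ 0) {w : ℝ × ℝ → ℝ}
    (hw : SpaceTimeRegular w) :
    IsBurgersSolution k w ↔ IsHeatSolution k (fun p => exp (-w p / k)) := by
  have hfactor : ∀ t x, -(exp (-w (t, x) / k) / k) ≠ 0 := fun t x =>
    neg_ne_zero.2 (div_ne_zero (exp_pos _).ne' hk)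
  refine forall₂_congr fun t x => ?_
  rw [← sub_eq_zero (a := deriv _ t), heat_residual_exp_neg_div hk hw t x,
    mul_eq_zero, or_iff_right (hfactor t x)]

/-- Nonlinear superposition rule for the variant of the Burgers equation: from two
solutions `w₁`, `w₂` and constants `ℓ₁`, `ℓ₂` one obtains the new solution
`w = −k log(exp(−(w₁+ℓ₁)/k) + exp(−(w₂+ℓ₂)/k))`. -/
theorem burgers_superposition_rule
    (k : ℝ) (hk : k ≠ 0) (w₁ w₂ : ℝ × ℝ → ℝ)
    (h₁t : ∀ t x : ℝ, DifferentiableAt ℝ (fun s => w₁ (s, x)) t)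
    (h₁x : ∀ t : ℝ, ContDiff ℝ 2 (fun y => w₁ (t, y)))
    (h₂t : ∀ t x : ℝ, DifferentiableAt ℝ (fun s => w₂ (s, x)) t)
    (h₂x : ∀ t : ℝ, ContDiff ℝ 2 (fun y => w₂ (t, y)))
    (hw₁ : IsBurgersSolution k w₁) (hw₂ : IsBurgersSolution k w₂)
    (ℓ₁ ℓ₂ : ℝ) :
    IsBurgersSolution k (fun p =>
      -k * Real.log (Real.exp (-(w₁ p + ℓ₁) / k) + Real.exp (-(w₂ p + ℓ₂) / k))) := by
  have hr₁ : SpaceTimeRegular fun p => w₁ p + ℓ₁ :=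
    SpaceTimeRegular.comp ⟨h₁t, h₁x⟩ (g := (· + ℓ₁)) (by fun_prop)
  have hr₂ : SpaceTimeRegular fun p => w₂ p + ℓ₂ :=
    SpaceTimeRegular.comp ⟨h₂t, h₂x⟩ (g := (· + ℓ₂)) (by fun_prop)
  have hexp₁ := hr₁.comp (g := fun v => exp (-v / k)) (by fun_prop)
  have hexp₂ := hr₂.comp (g := fun v => exp (-v / k)) (by fun_prop)
  set U : ℝ × ℝ → ℝ := fun p => exp (-(w₁ p + ℓ₁) / k) + exp (-(w₂ p + ℓ₂) / k)
  have hU_pos : ∀ p, 0 < U p := fun p => by positivity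
  have hU_heat : IsHeatSolution k U :=
    .add ((isBurgersSolution_iff_isHeatSolution_exp hk hr₁).1 (hw₁.add_const ℓ₁))
      ((isBurgersSolution_iff_isHeatSolution_exp hk hr₂).1 (hw₂.add_const ℓ₂)) hexp₁ hexp₂
  have hw_reg : SpaceTimeRegular fun p => -k * log (U p) :=
    (hexp₁.add hexp₂).comp_of_contDiffOn (contDiffOn_const.mul contDiffOn_log)
      isOpen_compl_singleton fun p => (hU_pos p).ne'
  rw [isBurgersSolution_iff_isHeatSolution_exp hk hw_reg]
  convert hU_heat using 2 with p
  rw [neg_mul, neg_neg, mul_div_cancel_left₀ _ hk, exp_log (hU_pos p)]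
end

section
/- Let φ, q₁, q₂ : ℝ → ℝ be differentiable, let G(φ) be the rotation matrix [[cos φ, sin φ],[−sin φ, cos φ]], let Q(t) = diag(q₁(t), q₂(t)), and set X(t) = G(φ(t))·Q(t)·G(φ(t))⁻¹. Then the commutator satisfies X(t)·X'(t) − X'(t)·X(t) = −φ'(t)·(q₂(t) − q₁(t))²·σ for all t, where σ = [[0, 1],[−1, 0]]. -/
attribute [local instance] Matrix.normedAddCommGroup Matrix.normedSpace

open Real

/-!
With `R θ` the rotation by `θ`, `G = R φ` and `G⁻¹ = R (-φ)`. Since `(R φ)' = φ' R φ σ` and `σ`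
commutes with every rotation, `X' = G (Q' - φ' ⁅Q, σ⁆) G⁻¹`, so
`⁅X, X'⁆ = G ⁅Q, Q' - φ' ⁅Q, σ⁆⁆ G⁻¹ = -φ' G ⁅Q, ⁅Q, σ⁆⁆ G⁻¹` because diagonal matrices commute.
Finally `⁅Q, ⁅Q, σ⁆⁆ = (q₁ - q₂)² σ`, and conjugating `σ` by a rotation leaves it unchanged.
-/

theorem hasDerivAt_matrix_iff {𝕜 : Type*} [NontriviallyNormedField 𝕜] {m n : Type*}
    [Fintype m] [Fintype n] {A : 𝕜 → Matrix m n 𝕜} {A' : Matrix m n 𝕜} {t : 𝕜} :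
    HasDerivAt A A' t ↔ ∀ i j, HasDerivAt (fun s => A s i j) (A' i j) t :=
  hasDerivAt_pi.trans (forall_congr' fun _ => hasDerivAt_pi)

theorem HasDerivAt.matrix_mul {𝕜 : Type*} [NontriviallyNormedField 𝕜] {l m n : Type*}
    [Fintype l] [Fintype m] [Fintype n] {A : 𝕜 → Matrix l m 𝕜} {B : 𝕜 → Matrix m n 𝕜}
    {A' : Matrix l m 𝕜} {B' : Matrix m n 𝕜} {t : 𝕜}
    (hA : HasDerivAt A A' t) (hB : HasDerivAt B B' t) :
    HasDerivAt (fun s => A s * B s) (A' * B t + A t * B') t := by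
  rw [hasDerivAt_matrix_iff] at hA hB ⊢
  intro i j
  simp only [Matrix.add_apply, Matrix.mul_apply, ← Finset.sum_add_distrib]
  exact HasDerivAt.fun_sum fun k _ => (hA i k).mul (hB k j)

theorem lie_conj {R : Type*} [Ring R] {U V : R} (hVU : V * U = 1) (A B : R) :
    ⁅U * A * V, U * B * V⁆ = U * ⁅A, B⁆ * V := by
  have cancel : ∀ C D : R, U * C * V * (U * D * V) = U * (C * D) * V := fun C D => by
    rw [mul_assoc (U * C), ← mul_assoc V, ← mul_assoc V, hVU, one_mul]
    simp only [mul_assoc]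
  rw [Ring.lie_def, Ring.lie_def, cancel, cancel, ← sub_mul, ← mul_sub]

theorem lie_sub_smul_of_commute {K A : Type*} [CommRing K] [Ring A] [Algebra K A] {Q D : A}
    (hQD : Commute Q D) (c : K) (C : A) : ⁅Q, D - c • C⁆ = -c • ⁅Q, C⁆ := by
  rw [Ring.lie_def, Ring.lie_def, mul_sub, sub_mul, hQD.eq, mul_smul_comm, smul_mul_assoc,
    smul_sub, neg_smul, neg_smul]
  abel

theorem commute_fin_two_diag {α : Type*} [CommRing α] (a b c d : α) :
    Commute !![a, 0; 0, b] !![c, 0; 0, d] := by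
  simpa only [Matrix.diagonal_vec2] using Matrix.commute_diagonal ![a, b] ![c, d]

namespace MatrixPolar

noncomputable def rotationMatrix (θ : ℝ) : Matrix (Fin 2) (Fin 2) ℝ :=
  !![cos θ, sin θ; -sin θ, cos θ]

def σ : Matrix (Fin 2) (Fin 2) ℝ :=
  !![0, 1; -1, 0]

theorem rotationMatrix_mul_rotationMatrix (a b : ℝ) :
    rotationMatrix a * rotationMatrix b = rotationMatrix (a + b) := by
  ext i j
  fin_cases i <;> fin_cases j <;>
    simp [rotationMatrix, Matrix.mul_apply, cos_add, sin_add] <;> ring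

theorem rotationMatrix_zero : rotationMatrix 0 = 1 := by
  ext i j
  fin_cases i <;> fin_cases j <;> simp [rotationMatrix]

theorem rotationMatrix_neg_mul_self (θ : ℝ) : rotationMatrix (-θ) * rotationMatrix θ = 1 := by
  rw [rotationMatrix_mul_rotationMatrix, neg_add_cancel, rotationMatrix_zero]

theorem rotationMatrix_mul_neg_self (θ : ℝ) : rotationMatrix θ * rotationMatrix (-θ) = 1 := by
  rw [rotationMatrix_mul_rotationMatrix, add_neg_cancel, rotationMatrix_zero]

theorem inv_rotationMatrix (θ : ℝ) : (rotationMatrix θ)⁻¹ = rotationMatrix (-θ) :=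
  Matrix.inv_eq_right_inv (rotationMatrix_mul_neg_self θ)

theorem rotationMatrix_mul_σ (θ : ℝ) : rotationMatrix θ * σ = σ * rotationMatrix θ := by
  ext i j
  fin_cases i <;> fin_cases j <;> simp [rotationMatrix, σ]

theorem conj_rotationMatrix_σ (θ : ℝ) : rotationMatrix θ * σ * rotationMatrix (-θ) = σ := by
  rw [rotationMatrix_mul_σ, mul_assoc, rotationMatrix_mul_neg_self, mul_one]

theorem fin_two_diag_lie_lie_σ (a b : ℝ) :
    ⁅!![a, 0; 0, b], ⁅!![a, 0; 0, b], σ⁆⁆ = (a - b) ^ 2 • σ := by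
  ext i j
  fin_cases i <;> fin_cases j <;> simp [Ring.lie_def, σ] <;> ring

theorem hasDerivAt_rotationMatrix {φ : ℝ → ℝ} {φ' t : ℝ} (hφ : HasDerivAt φ φ' t) :
    HasDerivAt (fun s => rotationMatrix (φ s)) (φ' • (rotationMatrix (φ t) * σ)) t := by
  simp only [hasDerivAt_matrix_iff, Fin.forall_fin_two, rotationMatrix, σ, Matrix.mul_fin_two,
    Matrix.smul_of, Matrix.of_apply, Matrix.cons_val_zero, Matrix.cons_val_one, Matrix.smul_cons,
    Matrix.smul_empty, smul_eq_mul]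
  exact ⟨⟨hφ.cos.congr_deriv (by ring), hφ.sin.congr_deriv (by ring)⟩,
    hφ.sin.neg.congr_deriv (by ring), hφ.cos.congr_deriv (by ring)⟩

theorem hasDerivAt_conj_rotationMatrix {φ : ℝ → ℝ} {Q : ℝ → Matrix (Fin 2) (Fin 2) ℝ}
    {φ' t : ℝ} {Q' : Matrix (Fin 2) (Fin 2) ℝ} (hφ : HasDerivAt φ φ' t)
    (hQ : HasDerivAt Q Q' t) :
    HasDerivAt (fun s => rotationMatrix (φ s) * Q s * rotationMatrix (-φ s))
      (rotationMatrix (φ t) * (Q' - φ' • ⁅Q t, σ⁆) * rotationMatrix (-φ t)) t := by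
  refine (((hasDerivAt_rotationMatrix hφ).matrix_mul hQ).matrix_mul
    (hasDerivAt_rotationMatrix hφ.neg)).congr_deriv ?_
  simp only [Pi.neg_apply]
  rw [rotationMatrix_mul_σ (-φ t), Ring.lie_def]
  simp only [Matrix.add_mul, Matrix.mul_sub, Matrix.sub_mul, Matrix.mul_smul, Matrix.smul_mul,
    Matrix.mul_neg, mul_assoc, neg_smul, smul_sub]
  abel

end MatrixPolar

open MatrixPolar in
/-- Generalized polar coordinates X = G Q G⁻¹ on 2×2 symmetric matrices: the matrix
angular momentum is [X, X'] = −φ'(q₂ − q₁)²·σ, with σ = [[0,1],[−1,0]]. -/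
theorem matrix_angular_momentum_polar
    (φ q₁ q₂ : ℝ → ℝ)
    (hφ : Differentiable ℝ φ) (hq₁ : Differentiable ℝ q₁) (hq₂ : Differentiable ℝ q₂)
    (G : ℝ → Matrix (Fin 2) (Fin 2) ℝ)
    (hG : ∀ s : ℝ, G s = !![Real.cos (φ s), Real.sin (φ s); -Real.sin (φ s), Real.cos (φ s)])
    (Q : ℝ → Matrix (Fin 2) (Fin 2) ℝ)
    (hQ : ∀ s : ℝ, Q s = !![q₁ s, 0; 0, q₂ s])
    (X : ℝ → Matrix (Fin 2) (Fin 2) ℝ)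
    (hX : ∀ s : ℝ, X s = G s * Q s * (G s)⁻¹) :
    ∀ t : ℝ, X t * deriv X t - deriv X t * X t
      = (-(deriv φ t) * (q₂ t - q₁ t) ^ 2) • (!![0, 1; -1, 0] : Matrix (Fin 2) (Fin 2) ℝ) := by
  intro t
  have hX_polar : ∀ s, X s = rotationMatrix (φ s) * Q s * rotationMatrix (-φ s) := fun s => by
    rw [hX s, ← inv_rotationMatrix, hG s, rotationMatrix]
  have hQ_deriv : HasDerivAt Q !![deriv q₁ t, 0; 0, deriv q₂ t] t := by
    rw [funext hQ, hasDerivAt_matrix_iff]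
    intro i j
    fin_cases i <;> fin_cases j
    exacts [(hq₁ t).hasDerivAt, hasDerivAt_const t 0, hasDerivAt_const t 0, (hq₂ t).hasDerivAt]
  have hX_deriv := hasDerivAt_conj_rotationMatrix (hφ t).hasDerivAt hQ_deriv
  rw [← funext hX_polar] at hX_deriv
  -- the statement's `deriv X t` uses `Matrix.addCommGroup`, not the normed structure, so
  -- `hX_deriv.deriv` matches it only up to defeq
  rw [← Ring.lie_def, show deriv X t = _ from hX_deriv.deriv, hX_polar t,
    lie_conj (rotationMatrix_neg_mul_self _), hQ t,
    lie_sub_smul_of_commute (commute_fin_two_diag _ _ _ _), fin_two_diag_lie_lie_σ,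
    smul_smul, Matrix.mul_smul, Matrix.smul_mul, conj_rotationMatrix_σ, sub_sq_comm]
  rfl
end

section
/- Let φ, q₁, q₂ : ℝ → ℝ be twice differentiable, let G(φ) = [[cos φ, sin φ],[−sin φ, cos φ]], Q(t) = diag(q₁(t), q₂(t)), and X(t) = G(φ(t))·Q(t)·G(φ(t))⁻¹. Assume X''(t) = 0 and q₂(t) ≠ q₁(t) for all t. Define l(t) = φ'(t)·(q₂(t) − q₁(t))². Then the diagonal variables satisfy the Calogero equations for two interacting particles on a line: q₁''(t) = −2·l(t)² / (q₂(t) − q₁(t))³ and q₂''(t) = 2·l(t)² / (q₂(t) − q₁(t))³ for all t. -/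
/-!
Identify a symmetric 2×2 matrix with a pair `(p, w) ∈ ℝ × ℂ`: `p` is half its trace and `w`
encodes its traceless part. Conjugating `diag(q₁, q₂)` by the rotation through `φ` gives
`p = (q₁ + q₂)/2` and `w = r e^{iθ}` with `r = (q₂ − q₁)/2`, `θ = 2φ`. Free motion `X'' = 0` thus
splits into `p'' = 0` and free motion of `w` in the plane, whose radial equation in polar
coordinates is `r'' = r θ'²`. These say `q₁'' + q₂'' = 0` and `q₂'' − q₁'' = 4φ'²(q₂ − q₁)`, which
is the Calogero system since `2l²/(q₂ − q₁)³ = 2φ'²(q₂ − q₁)`.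
-/

attribute [local instance] Matrix.normedAddCommGroup Matrix.normedSpace

open Complex

theorem ContinuousLinearMap.deriv_deriv_comp {𝕜 E F : Type*} [NontriviallyNormedField 𝕜]
    [NormedAddCommGroup E] [NormedSpace 𝕜 E] [NormedAddCommGroup F] [NormedSpace 𝕜 F]
    (L : E →L[𝕜] F) {g g' g'' : 𝕜 → E} (hg : ∀ s, HasDerivAt g (g' s) s)
    (hg' : ∀ s, HasDerivAt g' (g'' s) s) (t : 𝕜) :
    deriv (deriv (L ∘ g)) t = L (g'' t) := by
  have hLg : deriv (L ∘ g) = L ∘ g' :=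
    funext fun s => (L.hasFDerivAt.comp_hasDerivAt s (hg s)).deriv
  rw [hLg]
  exact (L.hasFDerivAt.comp_hasDerivAt t (hg' t)).deriv

section Polar

variable {r r' r'' θ θ' θ'' : ℝ → ℝ} {t : ℝ}

theorem hasDerivAt_polar (hr : HasDerivAt r (r' t) t) (hθ : HasDerivAt θ (θ' t) t) :
    HasDerivAt (fun s => (r s : ℂ) * exp (θ s * I))
      ((r' t + r t * θ' t * I) * exp (θ t * I)) t := by
  refine (hr.ofReal_comp.mul (hθ.ofReal_comp.mul_const I).cexp).congr_deriv ?_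
  ring

theorem hasDerivAt_polar_velocity (hr : HasDerivAt r (r' t) t) (hr' : HasDerivAt r' (r'' t) t)
    (hθ : HasDerivAt θ (θ' t) t) (hθ' : HasDerivAt θ' (θ'' t) t) :
    HasDerivAt (fun s => (r' s + r s * θ' s * I) * exp (θ s * I))
      ((r'' t - r t * θ' t ^ 2 + (2 * r' t * θ' t + r t * θ'' t) * I) * exp (θ t * I)) t := by
  have hcoeff := hr'.ofReal_comp.add ((hr.ofReal_comp.mul hθ'.ofReal_comp).mul_const I)
  refine (hcoeff.mul (hθ.ofReal_comp.mul_const I).cexp).congr_deriv ?_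
  simp only [Pi.add_apply, Pi.mul_apply]
  linear_combination (r t * θ' t ^ 2 * exp (θ t * I) : ℂ) * I_sq

end Polar

noncomputable def symmetricOfProd : ℝ × ℂ →L[ℝ] Matrix (Fin 2) (Fin 2) ℝ :=
  LinearMap.toContinuousLinearMap
    { toFun := fun v => !![v.1 - v.2.re, v.2.im; v.2.im, v.1 + v.2.re]
      map_add' := fun v w => by ext i j; fin_cases i <;> fin_cases j <;> simp <;> ring
      map_smul' := fun c v => by ext i j; fin_cases i <;> fin_cases j <;> simp <;> ring }

theorem symmetricOfProd_apply (v : ℝ × ℂ) :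
    symmetricOfProd v = !![v.1 - v.2.re, v.2.im; v.2.im, v.1 + v.2.re] := rfl

theorem symmetricOfProd_injective : Function.Injective symmetricOfProd := by
  refine (injective_iff_map_eq_zero symmetricOfProd).2 fun v hv => ?_
  have h00 := congrFun (congrFun hv 0) 0
  have h01 := congrFun (congrFun hv 0) 1
  have h11 := congrFun (congrFun hv 1) 1
  simp only [symmetricOfProd_apply, Matrix.of_apply, Matrix.cons_val_zero,
    Matrix.cons_val_one, Matrix.zero_apply] at h00 h01 h11
  exact Prod.ext (by linarith : v.1 = 0) (Complex.ext (by linarith : v.2.re = 0) h01)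

theorem rotation_mul_diagonal_mul_inv (θ a b : ℝ) :
    !![Real.cos θ, Real.sin θ; -Real.sin θ, Real.cos θ] * !![a, 0; 0, b] *
        (!![Real.cos θ, Real.sin θ; -Real.sin θ, Real.cos θ])⁻¹ =
      symmetricOfProd ((a + b) / 2, ((b - a) / 2 : ℝ) * exp ((2 * θ : ℝ) * I)) := by
  have pyth := Real.sin_sq_add_cos_sq θ
  have hdet : (!![Real.cos θ, Real.sin θ; -Real.sin θ, Real.cos θ]).det = 1 := by
    rw [Matrix.det_fin_two_of]; linear_combination pyth
  rw [Matrix.inv_def, hdet, symmetricOfProd_apply, Matrix.adjugate_fin_two]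
  simp only [re_ofReal_mul, im_ofReal_mul, exp_ofReal_mul_I_re, exp_ofReal_mul_I_im,
    Real.cos_two_mul, Real.sin_two_mul]
  ext i j
  fin_cases i <;> fin_cases j <;> simp [Matrix.mul_apply, Fin.sum_univ_two]
  · linear_combination b * pyth
  · ring
  · ring
  · linear_combination a * pyth

theorem free_motion_polar_equations {p p' p'' r r' r'' θ θ' θ'' : ℝ → ℝ}
    (hp : ∀ s, HasDerivAt p (p' s) s) (hp' : ∀ s, HasDerivAt p' (p'' s) s)
    (hr : ∀ s, HasDerivAt r (r' s) s) (hr' : ∀ s, HasDerivAt r' (r'' s) s)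
    (hθ : ∀ s, HasDerivAt θ (θ' s) s) (hθ' : ∀ s, HasDerivAt θ' (θ'' s) s) {t : ℝ}
    (hfree : deriv (deriv (symmetricOfProd ∘ fun s => (p s, (r s : ℂ) * exp (θ s * I)))) t = 0) :
    p'' t = 0 ∧ r'' t = r t * θ' t ^ 2 := by
  -- `trans` rather than `rw`: the matrix instances in the type of `symmetricOfProd` agree with
  -- those of the local norm only up to unfolding.
  have haccel := (symmetricOfProd.deriv_deriv_comp
    (fun s => (hp s).prodMk (hasDerivAt_polar (hr s) (hθ s)))
    (fun s => (hp' s).prodMk (hasDerivAt_polar_velocity (hr s) (hr' s) (hθ s) (hθ' s)))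
    t).symm.trans hfree
  obtain ⟨hscalar, hpolar⟩ :=
    Prod.mk_eq_zero.1 (symmetricOfProd_injective (haccel.trans (map_zero symmetricOfProd).symm))
  have hradial : r'' t - r t * θ' t ^ 2 = 0 := by
    simpa [← ofReal_pow] using
      congrArg re ((mul_eq_zero.1 hpolar).resolve_right (exp_ne_zero _))
  exact ⟨hscalar, sub_eq_zero.1 hradial⟩

/-- Reduction of free matrix motion X'' = 0 in generalized polar coordinates
X = G Q G⁻¹ to the Calogero system: with l = φ'(q₂ − q₁)², the eigenvalues satisfy
q₁'' = −2l²/(q₂ − q₁)³ and q₂'' = 2l²/(q₂ − q₁)³. -/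
theorem calogero_from_free_matrix_motion
    (φ q₁ q₂ : ℝ → ℝ)
    (hφ : Differentiable ℝ φ) (hφ' : Differentiable ℝ (deriv φ))
    (hq₁ : Differentiable ℝ q₁) (hq₁' : Differentiable ℝ (deriv q₁))
    (hq₂ : Differentiable ℝ q₂) (hq₂' : Differentiable ℝ (deriv q₂))
    (G : ℝ → Matrix (Fin 2) (Fin 2) ℝ)
    (hG : ∀ s : ℝ, G s = !![Real.cos (φ s), Real.sin (φ s); -Real.sin (φ s), Real.cos (φ s)])
    (Q : ℝ → Matrix (Fin 2) (Fin 2) ℝ)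
    (hQ : ∀ s : ℝ, Q s = !![q₁ s, 0; 0, q₂ s])
    (X : ℝ → Matrix (Fin 2) (Fin 2) ℝ)
    (hX : ∀ s : ℝ, X s = G s * Q s * (G s)⁻¹)
    (hfree : ∀ t : ℝ, deriv (deriv X) t = 0)
    (hne : ∀ t : ℝ, q₂ t ≠ q₁ t)
    (l : ℝ → ℝ) (hl : ∀ t : ℝ, l t = deriv φ t * (q₂ t - q₁ t) ^ 2) :
    ∀ t : ℝ,
      deriv (deriv q₁) t = -2 * l t ^ 2 / (q₂ t - q₁ t) ^ 3 ∧
      deriv (deriv q₂) t = 2 * l t ^ 2 / (q₂ t - q₁ t) ^ 3 := by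
  intro t
  have hXpolar : X = symmetricOfProd ∘ fun s =>
      ((q₁ s + q₂ s) / 2, (((q₂ s - q₁ s) / 2 : ℝ) : ℂ) * exp ((2 * φ s : ℝ) * I)) :=
    funext fun s => by rw [hX s, hG s, hQ s, rotation_mul_diagonal_mul_inv]; rfl
  obtain ⟨hsum, hradial⟩ := free_motion_polar_equations
    (fun s => ((hq₁ s).hasDerivAt.add (hq₂ s).hasDerivAt).div_const 2)
    (fun s => ((hq₁' s).hasDerivAt.add (hq₂' s).hasDerivAt).div_const 2)
    (fun s => ((hq₂ s).hasDerivAt.sub (hq₁ s).hasDerivAt).div_const 2)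
    (fun s => ((hq₂' s).hasDerivAt.sub (hq₁' s).hasDerivAt).div_const 2)
    (fun s => (hφ s).hasDerivAt.const_mul 2)
    (fun s => (hφ' s).hasDerivAt.const_mul 2)
    (hXpolar ▸ hfree t)
  simp only [Pi.sub_apply] at hradial
  have hgap : q₂ t - q₁ t ≠ 0 := sub_ne_zero.2 (hne t)
  rw [hl t]
  constructor <;> field_simp
  · linear_combination hsum - hradial
  · linear_combination hsum + hradial
end

section
/- Let q₁, p₁, q₂, p₂ : ℝ → ℝ be differentiable functions satisfying q₁' = 0, p₁' = 0, q₂'(t) = −2(q₁(t)² + p₁(t)²)·p₂(t), p₂'(t) = 2(q₁(t)² + p₁(t)²)·q₂(t), with initial condition q₁(0)² + p₁(0)² + q₂(0)² + p₂(0)² = 1. Define u = −p₁² − q₁² + p₂² + q₂², v = 2(p₁p₂ + q₁q₂), z = 2(p₁q₂ − q₁p₂) along the solution. Then: (i) q₁(t)² + p₁(t)² + q₂(t)² + p₂(t)² = 1 for all t (the flow preserves S³); and (ii) the reduced variables satisfy du/dt = 0, dv/dt = (1 − u)·z, and dz/dt = −(1 − u)·v for all t. -/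
/-!
On the flow, `(q₁, p₁)` is frozen and `(q₂, p₂)` rotates in its plane with angular velocity
`ω = 2(q₁² + p₁²)`. Hence `q₂² + p₂²` is conserved, which gives (i) and makes `u` constant, and
(i) turns `ω` into `1 - u`. Pairing the frozen vector `(p₁, q₁)` with the rotating one yields `v`
and `z`, which therefore rotate into each other with the same angular velocity.
-/

theorem is_const_of_hasDerivAt_zero {𝕜 G : Type*} [RCLike 𝕜] [NormedAddCommGroup G]
    [NormedSpace 𝕜 G] {f : 𝕜 → G} (hf : ∀ x, HasDerivAt f 0 x) (x y : 𝕜) : f x = f y :=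
  is_const_of_deriv_eq_zero (fun x => (hf x).differentiableAt) (fun x => (hf x).deriv) x y

section PlaneRotation

variable {x y a b : ℝ → ℝ} {ω t : ℝ}
  (hx : HasDerivAt x (-ω * y t) t) (hy : HasDerivAt y (ω * x t) t)
include hx hy

theorem HasDerivAt.sq_add_sq_of_rotation : HasDerivAt (fun s => x s ^ 2 + y s ^ 2) 0 t :=
  ((hx.pow 2).add (hy.pow 2)).congr_deriv (by ring)

variable (ha : HasDerivAt a 0 t) (hb : HasDerivAt b 0 t)
include ha hb

theorem HasDerivAt.mul_add_mul_of_rotation :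
    HasDerivAt (fun s => a s * y s + b s * x s) (ω * (a t * x t - b t * y t)) t :=
  ((ha.mul hy).add (hb.mul hx)).congr_deriv (by ring)

theorem HasDerivAt.mul_sub_mul_of_rotation :
    HasDerivAt (fun s => a s * x s - b s * y s) (-ω * (a t * y t + b t * x t)) t :=
  ((ha.mul hx).sub (hb.mul hy)).congr_deriv (by ring)

end PlaneRotation

/-- The classical limit of the quantum SU(2) dynamics: the flow of
Γ = 2(q₁²+p₁²)(q₂∂/∂p₂ − p₂∂/∂q₂) preserves S³, and the invariant variables
u = −p₁²−q₁²+p₂²+q₂², v = 2(p₁p₂+q₁q₂), z = 2(p₁q₂−q₁p₂) obey the reduced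
dynamics u' = 0, v' = (1−u)z, z' = −(1−u)v. -/
theorem quantum_su2_reduced_dynamics
    (q₁ p₁ q₂ p₂ : ℝ → ℝ)
    (hq₁ : ∀ t : ℝ, HasDerivAt q₁ 0 t)
    (hp₁ : ∀ t : ℝ, HasDerivAt p₁ 0 t)
    (hq₂ : ∀ t : ℝ, HasDerivAt q₂ (-2 * (q₁ t ^ 2 + p₁ t ^ 2) * p₂ t) t)
    (hp₂ : ∀ t : ℝ, HasDerivAt p₂ (2 * (q₁ t ^ 2 + p₁ t ^ 2) * q₂ t) t)
    (hinit : q₁ 0 ^ 2 + p₁ 0 ^ 2 + q₂ 0 ^ 2 + p₂ 0 ^ 2 = 1)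
    (u v z : ℝ → ℝ)
    (hu : ∀ t, u t = -(p₁ t) ^ 2 - q₁ t ^ 2 + p₂ t ^ 2 + q₂ t ^ 2)
    (hv : ∀ t, v t = 2 * (p₁ t * p₂ t + q₁ t * q₂ t))
    (hz : ∀ t, z t = 2 * (p₁ t * q₂ t - q₁ t * p₂ t)) :
    (∀ t : ℝ, q₁ t ^ 2 + p₁ t ^ 2 + q₂ t ^ 2 + p₂ t ^ 2 = 1) ∧
    (∀ t : ℝ,
      HasDerivAt u 0 t ∧
      HasDerivAt v ((1 - u t) * z t) t ∧
      HasDerivAt z (-(1 - u t) * v t) t) := by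
  have hq₂' (t : ℝ) : HasDerivAt q₂ (-(2 * (q₁ t ^ 2 + p₁ t ^ 2)) * p₂ t) t :=
    (hq₂ t).congr_deriv (by ring)
  have hq₁_const := is_const_of_hasDerivAt_zero hq₁
  have hp₁_const := is_const_of_hasDerivAt_zero hp₁
  have hplane_const := is_const_of_hasDerivAt_zero fun t => (hq₂' t).sq_add_sq_of_rotation (hp₂ t)
  have hsphere (t : ℝ) : q₁ t ^ 2 + p₁ t ^ 2 + q₂ t ^ 2 + p₂ t ^ 2 = 1 := by
    rw [hq₁_const t 0, hp₁_const t 0, add_assoc _ (q₂ t ^ 2), hplane_const t 0, ← add_assoc, hinit]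
  have hω (t : ℝ) : 1 - u t = 2 * (q₁ t ^ 2 + p₁ t ^ 2) := by
    linarith [hu t, hsphere t]
  refine ⟨hsphere, fun t => ⟨?_, ?_, ?_⟩⟩
  · have hu_const : u = fun _ => u 0 := funext fun s => by
      rw [hu, hu, hq₁_const s 0, hp₁_const s 0]
      linarith [hplane_const s 0]
    rw [hu_const]
    exact hasDerivAt_const t (u 0)
  · rw [funext hv, hω, hz]
    exact (((hq₂' t).mul_add_mul_of_rotation (hp₂ t) (hp₁ t) (hq₁ t)).const_mul 2).congr_deriv
      (by ring)
  · rw [funext hz, hω, hv]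
    exact (((hq₂' t).mul_sub_mul_of_rotation (hp₂ t) (hp₁ t) (hq₁ t)).const_mul 2).congr_deriv
      (by ring)
end
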